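/- arXiv:2308.05203 — 3 statements merged into one kernel-verified Lean document; each statement's English description precedes it below -/
import Mathlib

section
/- Let R be a linear operator on ℂ^m ⊗ ℂ^m that is involutive (R^2 = 1) and satisfies the Yang–Baxter equation, and let n ≥ 2. Then there exists a Hermitian inner product (a positive-definite Hermitian sesquilinear form) ⟨·,·⟩ on (ℂ^m)^{⊗n} with respect to which every operator R_{j,j+1} (1 ≤ j ≤ n-1) is self-adjoint: ⟨R_{j,j+1} u, v⟩ = ⟨u, R_{j,j+1} v⟩ for all u, v. -/
/-- The matrix of `R_{j,j+1}` on the `n`-fold tensor power `(ℂ^ι)^{⊗ n}`, whose basis is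
indexed by functions `Fin n → ι`; it acts by `R` on the factors `j, j+1` (0-indexed) and by
the identity elsewhere.  Here `R a b c d = R^{ab}_{cd}`, the components of the operator `R`
on `ℂ^ι ⊗ ℂ^ι` given by `R (e_c ⊗ e_d) = Σ_{a,b} R^{ab}_{cd} e_a ⊗ e_b`. -/
def Rjj {ι : Type*} [DecidableEq ι] (R : ι → ι → ι → ι → ℂ) (n j : ℕ) (hj : j + 1 < n) :
    Matrix (Fin n → ι) (Fin n → ι) ℂ := fun I K =>
  (if ∀ t : Fin n, (t : ℕ) ≠ j → (t : ℕ) ≠ j + 1 → I t = K t then 1 else 0) *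
    R (I ⟨j, by omega⟩) (I ⟨j + 1, hj⟩) (K ⟨j, by omega⟩) (K ⟨j + 1, hj⟩)

/-- `R` is involutive: `R² = 1` as an operator on `ℂ^ι ⊗ ℂ^ι`. -/
def IsInvolutiveR {ι : Type*} [Fintype ι] [DecidableEq ι] (R : ι → ι → ι → ι → ℂ) : Prop :=
  Rjj R 2 0 (by omega) * Rjj R 2 0 (by omega) = 1

/-- `R` satisfies the Yang–Baxter equation `R₁₂ R₂₃ R₁₂ = R₂₃ R₁₂ R₂₃` on `(ℂ^ι)^{⊗3}`. -/
def SatisfiesYBE {ι : Type*} [Fintype ι] [DecidableEq ι] (R : ι → ι → ι → ι → ℂ) : Prop :=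
  Rjj R 3 0 (by omega) * Rjj R 3 1 (by omega) * Rjj R 3 0 (by omega) =
    Rjj R 3 1 (by omega) * Rjj R 3 0 (by omega) * Rjj R 3 1 (by omega)



open Finset

set_option linter.unusedSectionVars false

section Emb

variable {ι : Type*} [Fintype ι] [DecidableEq ι] {d n : ℕ}

/-- Agreement of two index functions outside the range of `e`. -/
def OffEq (e : Fin d → Fin n) (I K : Fin n → ι) : Prop :=
  ∀ t, (∀ s, e s ≠ t) → I t = K t

instance (e : Fin d → Fin n) (I K : Fin n → ι) : Decidable (OffEq e I K) := by
  unfold OffEq; infer_instance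

/-- Embedding of a matrix acting on `d` tensor factors into one acting on `n` tensor factors,
along the coordinates given by `e`. -/
def Emb (e : Fin d → Fin n) (A : Matrix (Fin d → ι) (Fin d → ι) ℂ) :
    Matrix (Fin n → ι) (Fin n → ι) ℂ :=
  fun I K => (if OffEq e I K then 1 else 0) * A (I ∘ e) (K ∘ e)

/-- Replace the values of `I` on the range of `e` by those of `P`. -/
noncomputable def patch (e : Fin d → Fin n) (I : Fin n → ι) (P : Fin d → ι) : Fin n → ι :=
  fun t => if h : ∃ s, e s = t then P h.choose else I t

lemma patch_apply_not {e : Fin d → Fin n} {I : Fin n → ι} {P : Fin d → ι} {t : Fin n}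
    (h : ∀ s, e s ≠ t) : patch e I P t = I t := by
  rw [patch, dif_neg]
  rintro ⟨s, hs⟩; exact h s hs

lemma patch_apply {e : Fin d → Fin n} (he : Function.Injective e) (I : Fin n → ι)
    (P : Fin d → ι) (s : Fin d) : patch e I P (e s) = P s := by
  have h : ∃ s', e s' = e s := ⟨s, rfl⟩
  rw [patch, dif_pos h]
  congr 1
  exact he h.choose_spec

lemma patch_comp {e : Fin d → Fin n} (he : Function.Injective e) (I : Fin n → ι)
    (P : Fin d → ι) : (patch e I P) ∘ e = P :=
  funext fun s => patch_apply he I P s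

lemma offEq_patch (e : Fin d → Fin n) (I : Fin n → ι) (P : Fin d → ι) :
    OffEq e I (patch e I P) := fun t ht => (patch_apply_not ht).symm

lemma patch_eq {e : Fin d → Fin n} {I J : Fin n → ι} (hIJ : OffEq e I J) :
    patch e I (J ∘ e) = J := by
  funext t
  by_cases h : ∃ s, e s = t
  · rw [patch, dif_pos h]
    exact congrArg J h.choose_spec
  · push_neg at h
    rw [patch_apply_not h]
    exact hIJ t h

lemma offEq_patch_iff (e : Fin d → Fin n) (I K : Fin n → ι) (P : Fin d → ι) :
    OffEq e (patch e I P) K ↔ OffEq e I K := by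
  constructor <;> intro h t ht <;> have := h t ht
  · rwa [patch_apply_not ht] at this
  · rwa [patch_apply_not ht]

lemma sum_patch {e : Fin d → Fin n} (he : Function.Injective e) (I : Fin n → ι)
    (F : (Fin n → ι) → ℂ) :
    ∑ J : Fin n → ι, (if OffEq e I J then 1 else 0) * F J
      = ∑ P : Fin d → ι, F (patch e I P) := by
  simp only [ite_mul, one_mul, zero_mul]
  rw [← Finset.sum_filter]
  refine Finset.sum_nbij' (fun J => J ∘ e) (fun P => patch e I P) (fun _ _ => mem_univ _)
    (fun P _ => ?_) (fun J hJ => ?_) (fun P _ => patch_comp he I P) (fun J hJ => ?_)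
  · exact mem_filter.2 ⟨mem_univ _, offEq_patch e I P⟩
  · exact patch_eq (mem_filter.1 hJ).2
  · rw [patch_eq (mem_filter.1 hJ).2]

end Emb
section Emb2

variable {ι : Type*} [Fintype ι] [DecidableEq ι] {d d' n : ℕ}

lemma Emb_one (e : Fin d → Fin n) :
    Emb e (1 : Matrix (Fin d → ι) (Fin d → ι) ℂ) = (1 : Matrix (Fin n → ι) (Fin n → ι) ℂ) := by
  ext I K
  simp only [Emb, Matrix.one_apply]
  by_cases h : I = K
  · subst h
    simp [OffEq]
  · have hK : ¬(OffEq e I K ∧ I ∘ e = K ∘ e) := by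
      rintro ⟨h1, h2⟩
      refine h (funext fun t => ?_)
      by_cases ht : ∃ s, e s = t
      · obtain ⟨s, rfl⟩ := ht
        exact congrFun h2 s
      · push_neg at ht
        exact h1 t ht
    rw [if_neg h]
    by_cases h1 : OffEq e I K <;> by_cases h2 : I ∘ e = K ∘ e <;>
      simp_all [Matrix.one_apply]

lemma Emb_mul {e : Fin d → Fin n} (he : Function.Injective e)
    (A B : Matrix (Fin d → ι) (Fin d → ι) ℂ) :
    Emb e A * Emb e B = Emb e (A * B) := by
  ext I K
  rw [Matrix.mul_apply]
  have hsummand : ∀ J, (Emb e A I J) * (Emb e B J K)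
      = (if OffEq e I J then 1 else 0) *
        (A (I ∘ e) (J ∘ e) * ((if OffEq e J K then 1 else 0) * B (J ∘ e) (K ∘ e))) := by
    intro J; simp only [Emb]; ring
  rw [Finset.sum_congr rfl (fun J _ => hsummand J), sum_patch he]
  have h2 : ∀ P : Fin d → ι,
      A (I ∘ e) ((patch e I P) ∘ e) *
        ((if OffEq e (patch e I P) K then 1 else 0) * B ((patch e I P) ∘ e) (K ∘ e))
      = (if OffEq e I K then 1 else 0) * (A (I ∘ e) P * B P (K ∘ e)) := by
    intro P
    rw [patch_comp he]
    simp only [offEq_patch_iff]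
    ring
  rw [Finset.sum_congr rfl (fun P _ => h2 P), ← Finset.mul_sum]
  simp only [Emb, Matrix.mul_apply]

/-- Agreement of two index functions outside the ranges of both `e` and `e'`. -/
def OffEq2 (e : Fin d → Fin n) (e' : Fin d' → Fin n) (I K : Fin n → ι) : Prop :=
  ∀ t, (∀ s, e s ≠ t) → (∀ s, e' s ≠ t) → I t = K t

instance (e : Fin d → Fin n) (e' : Fin d' → Fin n) (I K : Fin n → ι) :
    Decidable (OffEq2 e e' I K) := by
  unfold OffEq2; infer_instance

lemma Emb_mul_disjoint_apply {e : Fin d → Fin n} {e' : Fin d' → Fin n}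
    (he : Function.Injective e) (hd : ∀ s s', e s ≠ e' s')
    (A : Matrix (Fin d → ι) (Fin d → ι) ℂ) (B : Matrix (Fin d' → ι) (Fin d' → ι) ℂ)
    (I K : Fin n → ι) :
    (Emb e A * Emb e' B) I K
      = (if OffEq2 e e' I K then 1 else 0) * (A (I ∘ e) (K ∘ e) * B (I ∘ e') (K ∘ e')) := by
  rw [Matrix.mul_apply]
  have hsummand : ∀ J, (Emb e A I J) * (Emb e' B J K)
      = (if OffEq e I J then 1 else 0) *
        (A (I ∘ e) (J ∘ e) * ((if OffEq e' J K then 1 else 0) * B (J ∘ e') (K ∘ e'))) := by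
    intro J; simp only [Emb]; ring
  rw [Finset.sum_congr rfl (fun J _ => hsummand J), sum_patch he]
  have hcomp : ∀ P : Fin d → ι, (patch e I P) ∘ e' = I ∘ e' := by
    intro P
    funext s'
    exact patch_apply_not (fun s => hd s s')
  have hcond : ∀ P : Fin d → ι,
      OffEq e' (patch e I P) K ↔ (OffEq2 e e' I K ∧ P = K ∘ e) := by
    intro P
    constructor
    · intro h
      refine ⟨fun t ht ht' => ?_, funext fun s => ?_⟩
      · have := h t ht'
        rwa [patch_apply_not ht] at this
      · have := h (e s) (fun s' hh => hd s s' hh.symm)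
        rwa [patch_apply he I P s] at this
    · rintro ⟨h2, rfl⟩
      intro t ht
      by_cases hex : ∃ s, e s = t
      · obtain ⟨s, rfl⟩ := hex
        rw [patch_apply he]
        rfl
      · push_neg at hex
        rw [patch_apply_not hex]
        exact h2 t hex ht
  have h2 : ∀ P : Fin d → ι,
      A (I ∘ e) ((patch e I P) ∘ e) *
        ((if OffEq e' (patch e I P) K then 1 else 0) * B ((patch e I P) ∘ e') (K ∘ e'))
      = (if P = K ∘ e then 1 else 0) *
          ((if OffEq2 e e' I K then 1 else 0) * (A (I ∘ e) P * B (I ∘ e') (K ∘ e'))) := by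
    intro P
    rw [patch_comp he, hcomp P]
    simp only [hcond]
    by_cases hP : P = K ∘ e <;> by_cases hO : OffEq2 e e' I K <;>
      simp [hP, hO] <;> ring
  rw [Finset.sum_congr rfl (fun P _ => h2 P)]
  simp only [ite_mul, one_mul, zero_mul]
  rw [Finset.sum_ite_eq' Finset.univ (K ∘ e)]
  simp

lemma Emb_comm {e : Fin d → Fin n} {e' : Fin d' → Fin n}
    (he : Function.Injective e) (he' : Function.Injective e')
    (hd : ∀ s s', e s ≠ e' s')
    (A : Matrix (Fin d → ι) (Fin d → ι) ℂ) (B : Matrix (Fin d' → ι) (Fin d' → ι) ℂ) :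
    Emb e A * Emb e' B = Emb e' B * Emb e A := by
  ext I K
  rw [Emb_mul_disjoint_apply he hd, Emb_mul_disjoint_apply he' (fun s s' h => hd s' s h.symm)]
  have hiff : OffEq2 e' e I K ↔ OffEq2 e e' I K :=
    ⟨fun h t h1 h2 => h t h2 h1, fun h t h1 h2 => h t h2 h1⟩
  simp only [hiff]
  ring

end Emb2
section Ident

variable {ι : Type*} [Fintype ι] [DecidableEq ι] {n : ℕ}

/-- The affine embedding `s ↦ b + s` of `Fin d` into `Fin n`. -/
def embA (b d n : ℕ) (h : b + d ≤ n) : Fin d → Fin n :=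
  fun s => ⟨b + s, by omega⟩

lemma embA_inj (b d n : ℕ) (h : b + d ≤ n) : Function.Injective (embA b d n h) := by
  intro s s' hs
  have := congrArg Fin.val hs
  simp only [embA] at this
  exact Fin.ext (by omega)

lemma Rjj_eq_Emb (R : ι → ι → ι → ι → ℂ) (b k d : ℕ) (hk : k + 1 < d) (hbd : b + d ≤ n)
    (hbk : b + k + 1 < n) :
    Rjj R n (b + k) hbk = Emb (embA b d n hbd) (Rjj R d k hk) := by
  ext I K
  simp only [Rjj, Emb, Function.comp]
  have harg1 : I (embA b d n hbd ⟨k, by omega⟩) = I ⟨b + k, by omega⟩ := rfl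
  have harg2 : I (embA b d n hbd ⟨k + 1, hk⟩) = I ⟨b + k + 1, hbk⟩ := rfl
  have harg3 : K (embA b d n hbd ⟨k, by omega⟩) = K ⟨b + k, by omega⟩ := rfl
  have harg4 : K (embA b d n hbd ⟨k + 1, hk⟩) = K ⟨b + k + 1, hbk⟩ := rfl
  rw [harg1, harg2, harg3, harg4]
  have hiff : (∀ t : Fin n, (t : ℕ) ≠ b + k → (t : ℕ) ≠ b + k + 1 → I t = K t)
      ↔ (OffEq (embA b d n hbd) I K ∧
          ∀ s : Fin d, (s : ℕ) ≠ k → (s : ℕ) ≠ k + 1 →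
            I (embA b d n hbd s) = K (embA b d n hbd s)) := by
    constructor
    · intro h
      constructor
      · intro t ht
        refine h t (fun hc => ht ⟨k, by omega⟩ (Fin.ext (by simp only [embA]; omega)))
          (fun hc => ht ⟨k + 1, by omega⟩ (Fin.ext (by simp only [embA]; omega)))
      · intro s hs1 hs2
        refine h _ ?_ ?_ <;> simp [embA] <;> omega
    · rintro ⟨h1, h2⟩ t ht1 ht2
      by_cases hex : ∃ s, embA b d n hbd s = t
      · obtain ⟨s, rfl⟩ := hex
        refine h2 s ?_ ?_ <;> simp only [embA] at ht1 ht2 ⊢ <;> omega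
      · push_neg at hex
        exact h1 t hex
  simp only [hiff]
  by_cases h1 : OffEq (embA b d n hbd) I K <;>
    by_cases h2 : ∀ s : Fin d, (s : ℕ) ≠ k → (s : ℕ) ≠ k + 1 →
      I (embA b d n hbd s) = K (embA b d n hbd s) <;>
    simp [h1, h2] <;> ring

end Ident
section Staircase

variable {M : Type*} [Monoid M]

/-- `stair G i l = G (i+l) * G (i+l-1) * ⋯ * G i`. -/
def stair (G : ℕ → M) (i : ℕ) : ℕ → M
  | 0 => G i
  | l + 1 => G (i + l + 1) * stair G i l

variable {G : ℕ → M}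

lemma stair_zero (i : ℕ) : stair G i 0 = G i := rfl

lemma stair_succ (i l : ℕ) : stair G i (l + 1) = G (i + l + 1) * stair G i l := rfl

lemma stair_bot (i l : ℕ) : stair G i (l + 1) = stair G (i + 1) l * G i := by
  induction l with
  | zero => rfl
  | succ l ih =>
    have e : i + (l + 1) + 1 = i + 1 + l + 1 := by omega
    rw [stair_succ, ih, stair_succ, e]
    exact (mul_assoc _ _ _).symm

section Rels

variable {N : ℕ}
  (hsq : ∀ j, G j * G j = 1)
  (hbr : ∀ j, j + 2 ≤ N → G j * G (j + 1) * G j = G (j + 1) * G j * G (j + 1))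
  (hcm : ∀ j k, j + 2 ≤ k → k < N → G j * G k = G k * G j)

include hcm in
lemma stair_comm_low : ∀ l i j : ℕ, j + 2 ≤ i → i + l < N →
    stair G i l * G j = G j * stair G i l := by
  intro l
  induction l with
  | zero => exact fun i j h hN => (hcm j i h (by omega)).symm
  | succ l ih =>
    intro i j h hN
    rw [stair_succ, mul_assoc, ih i j h (by omega), ← mul_assoc, ← mul_assoc,
      hcm j (i + l + 1) (by omega) (by omega)]

include hcm in
lemma stair_comm_high : ∀ l i j : ℕ, i + l + 2 ≤ j → j < N →
    stair G i l * G j = G j * stair G i l := by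
  intro l
  induction l with
  | zero => exact fun i j h hN => hcm i j (by omega) hN
  | succ l ih =>
    intro i j h hN
    rw [stair_succ, mul_assoc, ih i j (by omega) hN, ← mul_assoc, ← mul_assoc,
      hcm (i + l + 1) j (by omega) hN]

include hbr hcm in
lemma stair_push : ∀ l i j : ℕ, i ≤ j → j + 1 ≤ i + l → i + l < N →
    stair G i l * G (j + 1) = G j * stair G i l := by
  intro l
  induction l with
  | zero => intro i j h1 h2 _; omega
  | succ l ih =>
    intro i j hij hjl hN
    rcases Nat.lt_or_ge (j + 1) (i + l + 1) with hlt | hge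
    · -- j + 1 ≤ i + l : use ih, then commute G j past top letter
      rw [stair_succ, mul_assoc, ih i j hij (by omega) (by omega), ← mul_assoc, ← mul_assoc,
        hcm j (i + l + 1) (by omega) (by omega)]
    · -- j = i + l
      have hj : j = i + l := by omega
      subst hj
      rcases Nat.eq_zero_or_pos l with rfl | hl
      · show G (i + 1) * G i * G (i + 1) = G i * (G (i + 1) * G i)
        rw [← hbr i (by omega), mul_assoc]
      · obtain ⟨l', rfl⟩ : ∃ l', l = l' + 1 := ⟨l - 1, by omega⟩
        rw [stair_succ, stair_succ]
        have hc : stair G i l' * G (i + l' + 1 + 1) = G (i + l' + 1 + 1) * stair G i l' :=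
          stair_comm_high hcm l' i (i + l' + 1 + 1) (by omega) (by omega)
        calc G (i + l' + 1 + 1) * (G (i + l' + 1) * stair G i l') * G (i + l' + 1 + 1)
            = G (i + l' + 1 + 1) * G (i + l' + 1) * (stair G i l' * G (i + l' + 1 + 1)) := by
              simp [mul_assoc]
          _ = G (i + l' + 1 + 1) * G (i + l' + 1) * G (i + l' + 1 + 1) * stair G i l' := by
              rw [hc]; simp [mul_assoc]
          _ = G (i + l' + 1) * G (i + l' + 1 + 1) * G (i + l' + 1) * stair G i l' := by
              rw [← hbr (i + l' + 1) (by omega)]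
          _ = G (i + l' + 1) * (G (i + l' + 1 + 1) * (G (i + l' + 1) * stair G i l')) := by
              simp [mul_assoc]

end Rels
end Staircase
theorem staircase_finset {M : Type*} [Monoid M] [DecidableEq M] (G : ℕ → M)
    (hsq : ∀ j, G j * G j = 1) :
    ∀ N : ℕ,
      (∀ j, j + 2 ≤ N → G j * G (j + 1) * G j = G (j + 1) * G j * G (j + 1)) →
      (∀ j k, j + 2 ≤ k → k < N → G j * G k = G k * G j) →
      ∃ T : Finset M, 1 ∈ T ∧ ∀ A ∈ T, ∀ j, j < N → A * G j ∈ T := by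
  intro N
  induction N with
  | zero =>
    exact fun _ _ => ⟨{1}, Finset.mem_singleton_self 1, fun A _ j hj => absurd hj (by omega)⟩
  | succ N ih =>
    intro hbr hcm
    obtain ⟨T, hT1, hTcl⟩ := ih (fun j hj => hbr j (by omega)) (fun j k h hk => hcm j k h (by omega))
    refine ⟨T ∪ T.biUnion (fun A => (Finset.range (N + 1)).image
      (fun i => A * stair G i (N - i))), Finset.mem_union_left _ hT1, ?_⟩
    set T' := T ∪ T.biUnion (fun A => (Finset.range (N + 1)).image
      (fun i => A * stair G i (N - i))) with hT'
    have hmemL : ∀ B ∈ T, B ∈ T' := fun B hB => Finset.mem_union_left _ hB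
    have hmemR : ∀ B ∈ T, ∀ i l, i + l = N → B * stair G i l ∈ T' := by
      intro B hB i l hil
      refine Finset.mem_union_right _ (Finset.mem_biUnion.2 ⟨B, hB, ?_⟩)
      refine Finset.mem_image.2 ⟨i, Finset.mem_range.2 (by omega), ?_⟩
      rw [show N - i = l from by omega]
    intro x hx j hj
    rcases Finset.mem_union.1 hx with hx | hx
    · -- x ∈ T
      rcases Nat.lt_or_ge j N with hjN | hjN
      · exact hmemL _ (hTcl x hx j hjN)
      · -- j = N
        have hje : j = N := by omega
        have : x * G j = x * stair G N 0 := by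
          rw [stair_zero, hje]
        rw [this]
        exact hmemR x hx N 0 (by omega)
    · obtain ⟨A, hA, hx⟩ := Finset.mem_biUnion.1 hx
      obtain ⟨i, hi, rfl⟩ := Finset.mem_image.1 hx
      have hiN : i ≤ N := by have := Finset.mem_range.1 hi; omega
      obtain ⟨l, hil⟩ : ∃ l, i + l = N := ⟨N - i, by omega⟩
      rw [show N - i = l from by omega]
      rcases Nat.lt_or_ge (j + 1) i with hlow | h1
      · -- j + 2 ≤ i : commute down
        rw [mul_assoc, stair_comm_low hcm l i j (by omega) (by omega), ← mul_assoc]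
        exact hmemR _ (hTcl A hA j (by omega)) i l hil
      rcases Nat.eq_or_lt_of_le h1 with hji | h2
      · -- j + 1 = i : extend the staircase
        have : A * stair G i l * G j = A * stair G j (l + 1) := by
          rw [mul_assoc, stair_bot, show j + 1 = i from hji.symm]
        rw [this]
        exact hmemR A hA j (l + 1) (by omega)
      rcases Nat.eq_or_lt_of_le h2 with hji | h3
      · -- j = i : cancel
        have hje : j = i := by omega
        subst hje
        rcases Nat.eq_zero_or_pos l with hl0 | hlpos
        · rw [hl0, stair_zero, mul_assoc, hsq j, mul_one]
          exact hmemL A hA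
        · obtain ⟨l', rfl⟩ : ∃ l', l = l' + 1 := ⟨l - 1, by omega⟩
          have : A * stair G j (l' + 1) * G j = A * stair G (j + 1) l' := by
            rw [mul_assoc, stair_bot, mul_assoc, hsq j, mul_one]
          rw [this]
          exact hmemR A hA (j + 1) l' (by omega)
      · -- i < j : push
        obtain ⟨j', rfl⟩ : ∃ j', j = j' + 1 := ⟨j - 1, by omega⟩
        rw [mul_assoc, stair_push hbr hcm l i j' (by omega) (by omega) (by omega), ← mul_assoc]
        exact hmemR _ (hTcl A hA j' (by omega)) i l hil

/-- If `R` is involutive and satisfies the Yang–Baxter equation, then for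
`n ≥ 2` there is a Hermitian inner product (a positive-definite Hermitian sesquilinear form)
on `(ℂ^m)^{⊗n}` with respect to which every `R_{j,j+1}` is self-adjoint. -/
theorem exists_hermitian_inner_product_selfAdjoint_Rjj
    (m : ℕ) (R : Fin m → Fin m → Fin m → Fin m → ℂ)
    (hinv : IsInvolutiveR R) (hybe : SatisfiesYBE R)
    (n : ℕ) (hn : 2 ≤ n) :
    ∃ B : ((Fin n → Fin m) → ℂ) →ₗ⋆[ℂ] ((Fin n → Fin m) → ℂ) →ₗ[ℂ] ℂ,
      (∀ u v, B u v = star (B v u)) ∧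
      (∀ v, v ≠ 0 → 0 < (B v v).re) ∧
      (∀ (j : ℕ) (hj : j + 1 < n) (u v : (Fin n → Fin m) → ℂ),
        B ((Rjj R n j hj).mulVec u) v = B u ((Rjj R n j hj).mulVec v)) := by
  classical
  -- the total family of generators
  set g : ℕ → Matrix (Fin n → Fin m) (Fin n → Fin m) ℂ :=
    fun j => if h : j + 1 < n then Rjj R n j h else 1 with hg
  have hgdef : ∀ (j : ℕ) (hj : j + 1 < n), g j = Rjj R n j hj := fun j hj => dif_pos hj
  -- the square relation
  have hsq : ∀ j, g j * g j = 1 := by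
    intro j
    by_cases h : j + 1 < n
    · rw [hgdef j h]
      have h2 : j + 2 ≤ n := by omega
      have e0 : Rjj R n j h = Emb (embA j 2 n h2) (Rjj R 2 0 (by omega)) :=
        Rjj_eq_Emb R j 0 2 (by omega) h2 (by omega)
      have key : Rjj R 2 0 (by omega) * Rjj R 2 0 (by omega)
          = (1 : Matrix (Fin 2 → Fin m) (Fin 2 → Fin m) ℂ) := hinv
      rw [e0, Emb_mul (embA_inj j 2 n h2), key, Emb_one]
    · simp [hg, h]
  -- the braid relation
  have hbr : ∀ j, j + 2 ≤ n - 1 → g j * g (j + 1) * g j = g (j + 1) * g j * g (j + 1) := by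
    intro j hj
    have h1 : j + 1 < n := by omega
    have h2 : j + 1 + 1 < n := by omega
    have h3 : j + 3 ≤ n := by omega
    rw [hgdef j h1, hgdef (j + 1) h2]
    have e0 : Rjj R n j h1 = Emb (embA j 3 n h3) (Rjj R 3 0 (by omega)) :=
      Rjj_eq_Emb R j 0 3 (by omega) h3 (by omega)
    have e1 : Rjj R n (j + 1) h2 = Emb (embA j 3 n h3) (Rjj R 3 1 (by omega)) :=
      Rjj_eq_Emb R j 1 3 (by omega) h3 (by omega)
    have key : Rjj R 3 0 (by omega) * Rjj R 3 1 (by omega) * Rjj R 3 0 (by omega)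
        = Rjj R 3 1 (by omega) * Rjj R 3 0 (by omega) * Rjj R 3 1 (by omega) := hybe
    rw [e0, e1, Emb_mul (embA_inj j 3 n h3), Emb_mul (embA_inj j 3 n h3), key,
      ← Emb_mul (embA_inj j 3 n h3), ← Emb_mul (embA_inj j 3 n h3)]
  -- the commutation relation
  have hcm : ∀ j k, j + 2 ≤ k → k < n - 1 → g j * g k = g k * g j := by
    intro j k hjk hk
    have h1 : j + 1 < n := by omega
    have h2 : k + 1 < n := by omega
    have hj2 : j + 2 ≤ n := by omega
    have hk2 : k + 2 ≤ n := by omega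
    rw [hgdef j h1, hgdef k h2]
    have e0 : Rjj R n j h1 = Emb (embA j 2 n hj2) (Rjj R 2 0 (by omega)) :=
      Rjj_eq_Emb R j 0 2 (by omega) hj2 (by omega)
    have e1 : Rjj R n k h2 = Emb (embA k 2 n hk2) (Rjj R 2 0 (by omega)) :=
      Rjj_eq_Emb R k 0 2 (by omega) hk2 (by omega)
    have hdisj : ∀ (s s' : Fin 2), embA j 2 n hj2 s ≠ embA k 2 n hk2 s' := by
      intro s s' h
      have := congrArg Fin.val h
      simp only [embA] at this
      have hs := s.isLt
      have hs' := s'.isLt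
      omega
    rw [e0, e1]
    exact Emb_comm (embA_inj j 2 n hj2) (embA_inj k 2 n hk2) hdisj _ _
  -- the finite closed set
  obtain ⟨T, hT1, hTcl⟩ := staircase_finset g hsq (n - 1) hbr hcm
  have hTg : ∀ A ∈ T, ∀ (j : ℕ) (hj : j + 1 < n), A * Rjj R n j hj ∈ T := by
    intro A hA j hj
    rw [← hgdef j hj]
    exact hTcl A hA j (by omega)
  -- the sesquilinear form
  set f : ((Fin n → Fin m) → ℂ) → ((Fin n → Fin m) → ℂ) → ℂ :=
    fun u v => ∑ A ∈ T, ∑ i : Fin n → Fin m,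
      (starRingEnd ℂ) (A.mulVec u i) * (A.mulVec v i) with hf
  have H1 : ∀ u₁ u₂ v, f (u₁ + u₂) v = f u₁ v + f u₂ v := by
    intro u₁ u₂ v
    simp only [hf, Matrix.mulVec_add, Pi.add_apply, map_add, add_mul,
      Finset.sum_add_distrib]
  have H2 : ∀ (c : ℂ) u v, f (c • u) v = (starRingEnd ℂ) c • f u v := by
    intro c u v
    simp only [hf, Matrix.mulVec_smul, Pi.smul_apply, smul_eq_mul, map_mul, Finset.mul_sum]
    refine Finset.sum_congr rfl fun A _ => Finset.sum_congr rfl fun i _ => by ring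
  have H3 : ∀ u v₁ v₂, f u (v₁ + v₂) = f u v₁ + f u v₂ := by
    intro u v₁ v₂
    simp only [hf, Matrix.mulVec_add, Pi.add_apply, mul_add, Finset.sum_add_distrib]
  have H4 : ∀ (c : ℂ) u v, f u (c • v) = (RingHom.id ℂ) c • f u v := by
    intro c u v
    simp only [hf, Matrix.mulVec_smul, Pi.smul_apply, smul_eq_mul, RingHom.id_apply,
      Finset.mul_sum]
    refine Finset.sum_congr rfl fun A _ => Finset.sum_congr rfl fun i _ => by ring
  refine ⟨LinearMap.mk₂'ₛₗ (starRingEnd ℂ) (RingHom.id ℂ) f H1 H2 H3 H4, ?_, ?_, ?_⟩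
  · -- hermitian
    intro u v
    simp only [LinearMap.mk₂'ₛₗ_apply, hf, star_sum, star_mul', starRingEnd_apply, star_star]
    exact Finset.sum_congr rfl fun A _ => Finset.sum_congr rfl fun i _ => mul_comm _ _
  · -- positive definite
    intro v hv
    simp only [LinearMap.mk₂'ₛₗ_apply, hf, Complex.re_sum]
    have hterm : ∀ (z : ℂ), ((starRingEnd ℂ) z * z).re = Complex.normSq z := by
      intro z
      rw [mul_comm, Complex.mul_conj]
      exact Complex.ofReal_re _
    simp only [hterm]
    refine Finset.sum_pos' (fun A _ => Finset.sum_nonneg fun i _ => Complex.normSq_nonneg _)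
      ⟨1, hT1, ?_⟩
    rw [Matrix.one_mulVec]
    obtain ⟨i, hi⟩ : ∃ i, v i ≠ 0 := Function.ne_iff.1 hv
    exact Finset.sum_pos' (fun _ _ => Complex.normSq_nonneg _)
      ⟨i, Finset.mem_univ i, Complex.normSq_pos.2 hi⟩
  · -- self-adjointness
    intro j hj u v
    simp only [LinearMap.mk₂'ₛₗ_apply, hf]
    have hg0 : Rjj R n j hj * Rjj R n j hj = 1 := by
      rw [← hgdef j hj]; exact hsq j
    refine Finset.sum_nbij' (fun A => A * Rjj R n j hj) (fun A => A * Rjj R n j hj)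
      (fun A hA => hTg A hA j hj) (fun A hA => hTg A hA j hj)
      (fun A _ => by show A * Rjj R n j hj * Rjj R n j hj = A; rw [mul_assoc, hg0, mul_one])
      (fun A _ => by show A * Rjj R n j hj * Rjj R n j hj = A; rw [mul_assoc, hg0, mul_one]) ?_
    intro A hA
    have hvv : (Rjj R n j hj).mulVec ((Rjj R n j hj).mulVec v) = v := by
      rw [Matrix.mulVec_mulVec, hg0, Matrix.one_mulVec]
    refine Finset.sum_congr rfl fun i _ => ?_
    show _ = (starRingEnd ℂ) ((A * Rjj R n j hj).mulVec u i) *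
      (A * Rjj R n j hj).mulVec ((Rjj R n j hj).mulVec v) i
    rw [← Matrix.mulVec_mulVec (v := u), ← Matrix.mulVec_mulVec (v := (Rjj R n j hj).mulVec v),
      hvv]
end

section
/- Let V be a complex vector space, m ≥ 1, R an m×m×m×m complex tensor, and let x⁺_i, x⁻_i, y⁺_i, y⁻_i (i = 1, ..., m) be linear operators on V ('site 1' operators x and 'site 2' operators y) such that: (a) every x^±_i commutes with every y^±_j; (b) x⁻_i x⁺_j = Σ_{k,l} R^{ki}_{lj} x⁺_k x⁻_l + δ_{ij} for all i, j; (c) y⁻_i y⁺_j = Σ_{k,l} R^{ik}_{jl} y⁺_k y⁻_l + δ_{ij} for all i, j; (d) with n₁ = Σ_i x⁺_i x⁻_i and n₂ = Σ_i y⁺_i y⁻_i, one has [n₁, x^±_i] = ±x^±_i and [n₂, y^±_i] = ±y^±_i. Then the operators S⁺ = Σ_i x⁺_i y⁻_i, S⁻ = Σ_i x⁻_i y⁺_i, and S^z = (n₁ - n₂)/2 satisfy the sl₂ commutation relations [S⁺, S⁻] = 2 S^z and [S^z, S^±] = ±S^±. -/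
/-- Given operators `x⁺_i, x⁻_i` (site 1) and `y⁺_i, y⁻_i` (site 2) on a
complex vector space `V` satisfying: (a) every `x^±_i` commutes with every `y^±_j`;
(b) `x⁻_i x⁺_j = Σ_{k,l} R^{ki}_{lj} x⁺_k x⁻_l + δ_{ij}`;
(c) `y⁻_i y⁺_j = Σ_{k,l} R^{ik}_{jl} y⁺_k y⁻_l + δ_{ij}`;
(d) `[n₁, x^±_i] = ±x^±_i` and `[n₂, y^±_i] = ±y^±_i` where `n₁ = Σ_i x⁺_i x⁻_i` and
`n₂ = Σ_i y⁺_i y⁻_i`; the operators `S⁺ = Σ_i x⁺_i y⁻_i`, `S⁻ = Σ_i x⁻_i y⁺_i`, and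
`Sᶻ = (n₁ - n₂)/2` satisfy the `sl₂` relations `[S⁺, S⁻] = 2 Sᶻ` and `[Sᶻ, S^±] = ±S^±`.
Here `R i j k l` denotes the component `R^{ij}_{kl}`. -/
theorem sl2_from_local_spin_operators
    {V : Type*} [AddCommGroup V] [Module ℂ V]
    (m : ℕ) (hm : 1 ≤ m) (R : Fin m → Fin m → Fin m → Fin m → ℂ)
    (xp xm yp ym : Fin m → Module.End ℂ V)
    (hcomm_pp : ∀ i j, Commute (xp i) (yp j))
    (hcomm_pm : ∀ i j, Commute (xp i) (ym j))
    (hcomm_mp : ∀ i j, Commute (xm i) (yp j))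
    (hcomm_mm : ∀ i j, Commute (xm i) (ym j))
    (hx : ∀ i j, xm i * xp j =
      (∑ k, ∑ l, R k i l j • (xp k * xm l)) + if i = j then 1 else 0)
    (hy : ∀ i j, ym i * yp j =
      (∑ k, ∑ l, R i k j l • (yp k * ym l)) + if i = j then 1 else 0)
    (hn1p : ∀ i, (∑ t, xp t * xm t) * xp i - xp i * (∑ t, xp t * xm t) = xp i)
    (hn1m : ∀ i, (∑ t, xp t * xm t) * xm i - xm i * (∑ t, xp t * xm t) = -xm i)
    (hn2p : ∀ i, (∑ t, yp t * ym t) * yp i - yp i * (∑ t, yp t * ym t) = yp i)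
    (hn2m : ∀ i, (∑ t, yp t * ym t) * ym i - ym i * (∑ t, yp t * ym t) = -ym i) :
    (∑ i, xp i * ym i) * (∑ i, xm i * yp i) - (∑ i, xm i * yp i) * (∑ i, xp i * ym i) =
        (2 : ℂ) • ((2⁻¹ : ℂ) • ((∑ t, xp t * xm t) - ∑ t, yp t * ym t)) ∧
      ((2⁻¹ : ℂ) • ((∑ t, xp t * xm t) - ∑ t, yp t * ym t)) * (∑ i, xp i * ym i) -
          (∑ i, xp i * ym i) * ((2⁻¹ : ℂ) • ((∑ t, xp t * xm t) - ∑ t, yp t * ym t)) =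
        ∑ i, xp i * ym i ∧
      ((2⁻¹ : ℂ) • ((∑ t, xp t * xm t) - ∑ t, yp t * ym t)) * (∑ i, xm i * yp i) -
          (∑ i, xm i * yp i) * ((2⁻¹ : ℂ) • ((∑ t, xp t * xm t) - ∑ t, yp t * ym t)) =
        -∑ i, xm i * yp i := by
  set n1 := ∑ t, xp t * xm t with hn1def
  set n2 := ∑ t, yp t * ym t with hn2def
  set A := ∑ i, xp i * ym i with hAdef
  set B := ∑ i, xm i * yp i with hBdef
  -- commutation of n1 with y-operators, n2 with x-operators
  have hn1ym : ∀ i, Commute n1 (ym i) := fun i =>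
    Commute.sum_left _ _ _ fun t _ => (hcomm_pm t i).mul_left (hcomm_mm t i)
  have hn1yp : ∀ i, Commute n1 (yp i) := fun i =>
    Commute.sum_left _ _ _ fun t _ => (hcomm_pp t i).mul_left (hcomm_mp t i)
  have hn2xp : ∀ i, Commute (xp i) n2 := fun i =>
    Commute.sum_right _ _ _ fun t _ => (hcomm_pp i t).mul_right (hcomm_pm i t)
  have hn2xm : ∀ i, Commute (xm i) n2 := fun i =>
    Commute.sum_right _ _ _ fun t _ => (hcomm_mp i t).mul_right (hcomm_mm i t)
  -- commutator of n1, n2 with A and B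
  have c1 : n1 * A - A * n1 = A := by
    rw [hAdef, Finset.mul_sum, Finset.sum_mul, ← Finset.sum_sub_distrib]
    refine Finset.sum_congr rfl fun i _ => ?_
    have h1 : n1 * xp i = xp i + xp i * n1 := sub_eq_iff_eq_add.mp (hn1p i)
    have key : n1 * (xp i * ym i) = xp i * ym i + xp i * ym i * n1 := by
      calc n1 * (xp i * ym i) = (n1 * xp i) * ym i := (mul_assoc _ _ _).symm
        _ = (xp i + xp i * n1) * ym i := by rw [h1]
        _ = xp i * ym i + xp i * (n1 * ym i) := by noncomm_ring
        _ = xp i * ym i + xp i * ym i * n1 := by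
            rw [(hn1ym i).eq, ← mul_assoc]
    rw [key]; abel
  have c2 : n2 * A - A * n2 = -A := by
    rw [hAdef, Finset.mul_sum, Finset.sum_mul, ← Finset.sum_sub_distrib, ← Finset.sum_neg_distrib]
    refine Finset.sum_congr rfl fun i _ => ?_
    have h1 : n2 * ym i = -ym i + ym i * n2 := sub_eq_iff_eq_add.mp (hn2m i)
    have key : n2 * (xp i * ym i) = -(xp i * ym i) + xp i * ym i * n2 := by
      calc n2 * (xp i * ym i) = (n2 * xp i) * (ym i) := (mul_assoc _ _ _).symm
        _ = (xp i * n2) * ym i := by rw [← (hn2xp i).eq]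
        _ = xp i * (n2 * ym i) := mul_assoc _ _ _
        _ = xp i * (-ym i + ym i * n2) := by rw [h1]
        _ = -(xp i * ym i) + xp i * ym i * n2 := by noncomm_ring
    rw [key]; abel
  have c3 : n1 * B - B * n1 = -B := by
    rw [hBdef, Finset.mul_sum, Finset.sum_mul, ← Finset.sum_sub_distrib, ← Finset.sum_neg_distrib]
    refine Finset.sum_congr rfl fun i _ => ?_
    have h1 : n1 * xm i = -xm i + xm i * n1 := sub_eq_iff_eq_add.mp (hn1m i)
    have key : n1 * (xm i * yp i) = -(xm i * yp i) + xm i * yp i * n1 := by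
      calc n1 * (xm i * yp i) = (n1 * xm i) * yp i := (mul_assoc _ _ _).symm
        _ = (-xm i + xm i * n1) * yp i := by rw [h1]
        _ = -(xm i * yp i) + xm i * (n1 * yp i) := by noncomm_ring
        _ = -(xm i * yp i) + xm i * yp i * n1 := by
            rw [(hn1yp i).eq, ← mul_assoc]
    rw [key]; abel
  have c4 : n2 * B - B * n2 = B := by
    rw [hBdef, Finset.mul_sum, Finset.sum_mul, ← Finset.sum_sub_distrib]
    refine Finset.sum_congr rfl fun i _ => ?_
    have h1 : n2 * yp i = yp i + yp i * n2 := sub_eq_iff_eq_add.mp (hn2p i)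
    have key : n2 * (xm i * yp i) = xm i * yp i + xm i * yp i * n2 := by
      calc n2 * (xm i * yp i) = (n2 * xm i) * yp i := (mul_assoc _ _ _).symm
        _ = (xm i * n2) * yp i := by rw [← (hn2xm i).eq]
        _ = xm i * (n2 * yp i) := mul_assoc _ _ _
        _ = xm i * (yp i + yp i * n2) := by rw [h1]
        _ = xm i * yp i + xm i * yp i * n2 := by noncomm_ring
    rw [key]; abel
  -- the main commutator [A, B] = n1 - n2
  have hAB : A * B - B * A = n1 - n2 := by
    have term1 : ∀ i j, (xp i * ym i) * (xm j * yp j) =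
        (∑ k, ∑ l, R i k j l • (xp i * xm j * (yp k * ym l))) +
          (if i = j then xp i * xm j else 0) := by
      intro i j
      have step : (xp i * ym i) * (xm j * yp j) = (xp i * xm j) * (ym i * yp j) := by
        calc (xp i * ym i) * (xm j * yp j)
            = xp i * ((ym i * xm j) * yp j) := by rw [mul_assoc, mul_assoc]
          _ = xp i * ((xm j * ym i) * yp j) := by rw [← (hcomm_mm j i).eq]
          _ = (xp i * xm j) * (ym i * yp j) := by rw [mul_assoc, ← mul_assoc, ← mul_assoc]
      rw [step, hy i j, mul_add, Finset.mul_sum]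
      congr 1
      · exact Finset.sum_congr rfl fun k _ => by
          rw [Finset.mul_sum]
          exact Finset.sum_congr rfl fun l _ => by
            rw [mul_smul_comm, mul_assoc]
      · split <;> simp
    have term2 : ∀ i j, (xm i * yp i) * (xp j * ym j) =
        (∑ k, ∑ l, R k i l j • (xp k * xm l * (yp i * ym j))) +
          (if i = j then yp i * ym j else 0) := by
      intro i j
      have step : (xm i * yp i) * (xp j * ym j) = (xm i * xp j) * (yp i * ym j) := by
        calc (xm i * yp i) * (xp j * ym j)
            = xm i * ((yp i * xp j) * ym j) := by rw [mul_assoc, mul_assoc]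
          _ = xm i * ((xp j * yp i) * ym j) := by rw [(hcomm_pp j i).eq]
          _ = (xm i * xp j) * (yp i * ym j) := by rw [mul_assoc, ← mul_assoc, ← mul_assoc]
      rw [step, hx i j, add_mul, Finset.sum_mul]
      congr 1
      · exact Finset.sum_congr rfl fun k _ => by
          rw [Finset.sum_mul]
          exact Finset.sum_congr rfl fun l _ => by
            rw [smul_mul_assoc]
      · split <;> simp
    have hABexp : A * B =
        (∑ i, ∑ j, ∑ k, ∑ l, R i k j l • (xp i * xm j * (yp k * ym l))) + n1 := by
      rw [hAdef, hBdef, Finset.sum_mul_sum]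
      rw [Finset.sum_congr rfl fun i (_ : i ∈ Finset.univ) =>
        Finset.sum_congr rfl fun j _ => term1 i j]
      rw [hn1def]
      simp [Finset.sum_add_distrib]
    have hBAexp : B * A =
        (∑ i, ∑ j, ∑ k, ∑ l, R k i l j • (xp k * xm l * (yp i * ym j))) + n2 := by
      rw [hBdef, hAdef, Finset.sum_mul_sum]
      rw [Finset.sum_congr rfl fun i (_ : i ∈ Finset.univ) =>
        Finset.sum_congr rfl fun j _ => term2 i j]
      rw [hn2def]
      simp [Finset.sum_add_distrib]
    have swap : (∑ i, ∑ j, ∑ k, ∑ l, R k i l j • (xp k * xm l * (yp i * ym j))) =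
        ∑ k, ∑ l, ∑ i, ∑ j, R k i l j • (xp k * xm l * (yp i * ym j)) := by
      calc (∑ i, ∑ j, ∑ k, ∑ l, R k i l j • (xp k * xm l * (yp i * ym j)))
          = ∑ i, ∑ k, ∑ j, ∑ l, R k i l j • (xp k * xm l * (yp i * ym j)) :=
            Finset.sum_congr rfl fun i _ => Finset.sum_comm
        _ = ∑ k, ∑ i, ∑ j, ∑ l, R k i l j • (xp k * xm l * (yp i * ym j)) :=
            Finset.sum_comm
        _ = ∑ k, ∑ i, ∑ l, ∑ j, R k i l j • (xp k * xm l * (yp i * ym j)) :=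
            Finset.sum_congr rfl fun k _ => Finset.sum_congr rfl fun i _ => Finset.sum_comm
        _ = ∑ k, ∑ l, ∑ i, ∑ j, R k i l j • (xp k * xm l * (yp i * ym j)) :=
            Finset.sum_congr rfl fun k _ => Finset.sum_comm
    rw [hABexp, hBAexp, swap]
    abel
  refine ⟨?_, ?_, ?_⟩
  · rw [hAB]; module
  · have expand : ((2⁻¹ : ℂ) • (n1 - n2)) * A - A * ((2⁻¹ : ℂ) • (n1 - n2)) =
        (2⁻¹ : ℂ) • ((n1 * A - A * n1) - (n2 * A - A * n2)) := by
      rw [smul_mul_assoc, mul_smul_comm, ← smul_sub]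
      congr 1
      noncomm_ring
    rw [expand, c1, c2]
    module
  · have expand : ((2⁻¹ : ℂ) • (n1 - n2)) * B - B * ((2⁻¹ : ℂ) • (n1 - n2)) =
        (2⁻¹ : ℂ) • ((n1 * B - B * n1) - (n2 * B - B * n2)) := by
      rw [smul_mul_assoc, mul_smul_comm, ← smul_sub]
      congr 1
      noncomm_ring
    rw [expand, c3, c4]
    module
end

section
/- Let R be an m×m×m×m complex tensor that is involutive and satisfies the Yang–Baxter equation, when viewed as an operator on ℂ^m ⊗ ℂ^m. For n ≥ 1, let μ_n : (ℂ^m)^{⊗n} → ℂ_R⟨ψ⁺⟩ be the linear map sending e_{i₁} ⊗ ⋯ ⊗ e_{iₙ} to ψ⁺_{i₁} ⋯ ψ⁺_{iₙ}. Then the image of μ_n (the span of all degree-n products of the generators, i.e. the n-particle sector of the Fock space) is linearly isomorphic to the common eigenspace {Ψ ∈ (ℂ^m)^{⊗n} : R_{j,j+1} Ψ = Ψ for all j = 1, ..., n-1}; in particular, the rank of μ_n equals the dimension of this common eigenspace. -/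
/-- The defining relation of the quadratic algebra `ℂ_R⟨ψ⁺⟩`:
`ψ⁺_i ψ⁺_j = Σ_{k,l} R^{kl}_{ij} ψ⁺_k ψ⁺_l`, with `R i j k l = R^{ij}_{kl}`. -/
inductive CpRel (m : ℕ) (R : Fin m → Fin m → Fin m → Fin m → ℂ) :
    FreeAlgebra ℂ (Fin m) → FreeAlgebra ℂ (Fin m) → Prop
  | rel (i j : Fin m) :
      CpRel m R (FreeAlgebra.ι ℂ i * FreeAlgebra.ι ℂ j)
        (∑ k, ∑ l, R k l i j • (FreeAlgebra.ι ℂ k * FreeAlgebra.ι ℂ l))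

/-- The quadratic algebra `ℂ_R⟨ψ⁺⟩`. -/
abbrev Cp (m : ℕ) (R : Fin m → Fin m → Fin m → Fin m → ℂ) := RingQuot (CpRel m R)

/-- The generator `ψ⁺_i ∈ ℂ_R⟨ψ⁺⟩`. -/
noncomputable def psiP (m : ℕ) (R : Fin m → Fin m → Fin m → Fin m → ℂ) (i : Fin m) :
    Cp m R :=
  RingQuot.mkAlgHom ℂ (CpRel m R) (FreeAlgebra.ι ℂ i)

/-- The linear map `μ_n : (ℂ^m)^{⊗n} → ℂ_R⟨ψ⁺⟩` sending the basis vector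
`e_{i₁} ⊗ ⋯ ⊗ e_{iₙ}` to the ordered product `ψ⁺_{i₁} ψ⁺_{i₂} ⋯ ψ⁺_{iₙ}`. -/
noncomputable def muN (m : ℕ) (R : Fin m → Fin m → Fin m → Fin m → ℂ) (n : ℕ) :
    ((Fin n → Fin m) → ℂ) →ₗ[ℂ] Cp m R :=
  (Pi.basisFun ℂ (Fin n → Fin m)).constr ℂ
    fun I => (((List.finRange n).map fun t => psiP m R (I t)).prod)

/-!
Write `Vₙ = (ℂ^m)^{⊗n}`, `Lⱼ = R_{j,j+1}` and `Kₙ = Σⱼ range (Lⱼ - 1)`.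

The defining relations of `ℂ_R⟨ψ⁺⟩` say that `μₙ` kills `Kₙ`, and nothing more: the creation
operators `[v] ↦ [e_i ⊗ v]` on the Fock space `⨁ₙ Vₙ / Kₙ` satisfy these relations, and
`ψ⁺_{i₁} ⋯ ψ⁺_{iₙ}` sends the vacuum to `[e_{i₁} ⊗ ⋯ ⊗ e_{iₙ}]`. Hence `range μₙ ≅ Vₙ / Kₙ`.

If `R` is involutive and satisfies the Yang–Baxter equation, the `Lⱼ` satisfy the Coxeter
relations of `Sₙ`, so the (unnormalized) symmetrizer `S` makes sense. It satisfies `S Lⱼ = S` and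
`S - n! ∈ Σⱼ End(Vₙ) (Lⱼ - 1)`: it kills `Kₙ` and is `n!` on the common fixed space `Fixₙ`, so
`Kₙ ∩ Fixₙ = 0`. The same construction with all products reversed gives `S'` with `Lⱼ S' = S'`
and `range (S' - n!) ⊆ Kₙ`, so `Kₙ + Fixₙ = Vₙ`. Thus `Vₙ / Kₙ ≅ Fixₙ`.
-/

open Finset
open scoped Nat

namespace YangBaxter

section Coxeter

variable {A : Type*} [Ring A]

/-- `s 0, …, s (n - 2)` satisfy the Coxeter relations of the symmetric group on `n` letters. -/
structure IsCoxeterFamily (s : ℕ → A) (n : ℕ) : Prop where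
  mul_self : ∀ j, j + 1 < n → s j * s j = 1
  braid : ∀ j, j + 2 < n → s j * s (j + 1) * s j = s (j + 1) * s j * s (j + 1)
  comm : ∀ j k, j + 2 ≤ k → k + 1 < n → s j * s k = s k * s j

variable {s : ℕ → A} {n : ℕ}

lemma IsCoxeterFamily.shift (hs : IsCoxeterFamily s (n + 1)) :
    IsCoxeterFamily (fun j => s (j + 1)) n where
  mul_self j hj := hs.mul_self (j + 1) (by omega)
  braid j hj := hs.braid (j + 1) (by omega)
  comm j k hjk hk := hs.comm (j + 1) (k + 1) (by omega) (by omega)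

lemma IsCoxeterFamily.op (hs : IsCoxeterFamily s n) :
    IsCoxeterFamily (fun j => MulOpposite.op (s j)) n where
  mul_self j hj := by rw [← MulOpposite.op_mul, hs.mul_self j hj, MulOpposite.op_one]
  braid j hj := by simp only [← MulOpposite.op_mul, ← mul_assoc, hs.braid j hj]
  comm j k hjk hk := by simp only [← MulOpposite.op_mul, hs.comm j k hjk hk]

variable (s) in
def prodGens : ℕ → A
  | 0 => 1
  | k + 1 => prodGens k * s k

/-- For a Coxeter family, the sum over the symmetric group on `n` letters (without the factor
`1 / n!`), read off the coset decomposition `S_{k+1} = ⋃_{i ≤ k} S'_k · s₀ ⋯ s_{i-1}`, where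
`S'_k` permutes the last `k` letters. -/
def symmetrizer : ℕ → (ℕ → A) → A
  | 0, _ => 1
  | n + 1, s => ∑ k ∈ range (n + 1), symmetrizer n (fun j => s (j + 1)) * prodGens s k

lemma IsCoxeterFamily.prodGens_mul_comm (hs : IsCoxeterFamily s n) {k j : ℕ} (hkj : k < j)
    (hj : j + 1 < n) : prodGens s k * s j = s j * prodGens s k := by
  induction k with
  | zero => simp [prodGens]
  | succ k ih =>
    rw [prodGens, mul_assoc, hs.comm k j (by omega) hj, ← mul_assoc, ih (by omega),
      mul_assoc]

lemma IsCoxeterFamily.prodGens_mul_of_add_two_le (hs : IsCoxeterFamily s n) {k j : ℕ}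
    (hjk : j + 2 ≤ k) (hk : k < n) : prodGens s k * s j = s (j + 1) * prodGens s k := by
  induction k with
  | zero => omega
  | succ k ih =>
    rcases (show j + 2 = k + 1 ∨ j + 2 < k + 1 by omega) with hk' | hk'
    · obtain rfl : k = j + 1 := by omega
      simp only [prodGens, mul_assoc]
      rw [← mul_assoc (s j), hs.braid j (by omega)]
      simp only [← mul_assoc]
      rw [hs.prodGens_mul_comm (lt_add_one j) (by omega)]
    · rw [prodGens, mul_assoc, ← hs.comm j k (by omega) (by omega), ← mul_assoc,
        ih (by omega) (by omega), mul_assoc]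

theorem IsCoxeterFamily.symmetrizer_mul (hs : IsCoxeterFamily s n) {j : ℕ} (hj : j + 1 < n) :
    symmetrizer n s * s j = symmetrizer n s := by
  induction n generalizing s j with
  | zero => omega
  | succ n ih =>
    set S := symmetrizer n (fun j => s (j + 1))
    have hS : ∀ i, i + 1 < n → S * s (i + 1) = S := fun i hi => ih hs.shift hi
    have key : ∀ k ∈ range (n + 1),
        S * prodGens s k * s j = S * prodGens s (Equiv.swap j (j + 1) k) := by
      intro k hk
      rw [mem_range] at hk
      rcases lt_trichotomy k j with hkj | rfl | hjk
      · obtain ⟨i, rfl⟩ : ∃ i, j = i + 1 := ⟨j - 1, by omega⟩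
        rw [mul_assoc, hs.prodGens_mul_comm hkj hj, ← mul_assoc, hS i (by omega),
          Equiv.swap_apply_of_ne_of_ne (by omega) (by omega)]
      · rw [Equiv.swap_apply_left, mul_assoc, ← prodGens]
      · obtain rfl | hjk := (show k = j + 1 ∨ j + 2 ≤ k by omega)
        · rw [Equiv.swap_apply_right, prodGens, mul_assoc, mul_assoc, hs.mul_self j hj,
            mul_one]
        · rw [mul_assoc, hs.prodGens_mul_of_add_two_le hjk hk, ← mul_assoc, hS j (by omega),
            Equiv.swap_apply_of_ne_of_ne (by omega) (by omega)]
    rw [symmetrizer, sum_mul, sum_congr rfl key]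
    exact sum_equiv (Equiv.swap j (j + 1))
      (fun k => by simp only [mem_range, Equiv.swap_apply_def]; split_ifs <;> omega)
      (fun _ _ => rfl)

variable (s n) in
def augmentationIdeal : Ideal A := Ideal.span ((fun j => s j - 1) '' {j | j + 1 < n})

lemma augmentationIdeal_shift_le :
    augmentationIdeal (fun j => s (j + 1)) n ≤ augmentationIdeal s (n + 1) := by
  refine Ideal.span_mono ?_
  rintro _ ⟨j, hj, rfl⟩
  exact ⟨j + 1, by simp only [Set.mem_ofPred_eq] at hj ⊢; omega, rfl⟩

lemma prodGens_sub_one_mem {k : ℕ} (hk : k < n) :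
    prodGens s k - 1 ∈ augmentationIdeal s n := by
  induction k with
  | zero => simp [prodGens]
  | succ k ih =>
    have hgen : s k - 1 ∈ augmentationIdeal s n := Ideal.subset_span ⟨k, hk, rfl⟩
    rw [show prodGens s (k + 1) - 1 = prodGens s k * (s k - 1) + (prodGens s k - 1) by
      rw [prodGens]; noncomm_ring]
    exact add_mem (Ideal.mul_mem_left _ _ hgen) (ih (by omega))

theorem symmetrizer_sub_factorial_mem :
    symmetrizer n s - (n ! : A) ∈ augmentationIdeal s n := by
  induction n generalizing s with
  | zero => simp [symmetrizer]
  | succ n ih =>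
    set S := symmetrizer n (fun j => s (j + 1))
    have hS : S - (n ! : A) ∈ augmentationIdeal s (n + 1) := augmentationIdeal_shift_le ih
    have hsum : symmetrizer (n + 1) s - ((n + 1)! : A) =
        ∑ k ∈ range (n + 1), (S * (prodGens s k - 1) + (S - (n ! : A))) := by
      simp only [symmetrizer, mul_sub, mul_one, sub_add_sub_cancel, sum_sub_distrib, sum_const,
        card_range, Nat.factorial_succ, Nat.cast_mul, nsmul_eq_mul, Nat.cast_succ, S]
    rw [hsum]
    exact sum_mem fun k hk =>
      add_mem (Ideal.mul_mem_left _ _ (prodGens_sub_one_mem (mem_range.mp hk))) hS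

end Coxeter

section Module

variable {K M : Type*} [DivisionRing K] [AddCommGroup M] [Module K M]
  {s : ℕ → Module.End K M} {n : ℕ}

variable (s n) in
def fixSpace : Submodule K M := ⨅ (j : ℕ) (_ : j + 1 < n), LinearMap.ker (s j - 1)

variable (s n) in
def relSpace : Submodule K M := ⨆ (j : ℕ) (_ : j + 1 < n), LinearMap.range (s j - 1)

lemma apply_sub_self_mem_relSpace {j : ℕ} (hj : j + 1 < n) (v : M) :
    s j v - v ∈ relSpace s n :=
  le_iSup₂ (f := fun j (_ : j + 1 < n) => LinearMap.range (s j - 1)) j hj ⟨v, rfl⟩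

lemma apply_mem_fixSpace {P : Module.End K M} (hP : ∀ j, j + 1 < n → s j * P = P) (v : M) :
    P v ∈ fixSpace s n := by
  simp only [fixSpace, Submodule.mem_iInf, LinearMap.mem_ker, LinearMap.sub_apply,
    Module.End.one_apply, sub_eq_zero]
  exact fun j hj => LinearMap.congr_fun (hP j hj) v

lemma relSpace_le_ker {P : Module.End K M} (hP : ∀ j, j + 1 < n → P * s j = P) :
    relSpace s n ≤ LinearMap.ker P := by
  refine iSup₂_le fun j hj => ?_
  rintro _ ⟨v, rfl⟩
  rw [LinearMap.mem_ker, ← Module.End.mul_apply, mul_sub, hP j hj, mul_one, sub_self,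
    LinearMap.zero_apply]

lemma apply_eq_zero_of_mem_augmentationIdeal {a : Module.End K M}
    (ha : a ∈ augmentationIdeal s n) {x : M} (hx : x ∈ fixSpace s n) : a x = 0 := by
  suffices augmentationIdeal s n ≤ LinearMap.ker (LinearMap.toSpanSingleton _ M x) from this ha
  refine Ideal.span_le.mpr ?_
  rintro _ ⟨j, hj, rfl⟩
  simp only [fixSpace, Submodule.mem_iInf, LinearMap.mem_ker] at hx
  exact hx j hj

lemma range_le_relSpace_of_mem_augmentationIdeal_op {a : (Module.End K M)ᵐᵒᵖ}
    (ha : a ∈ augmentationIdeal (fun j => MulOpposite.op (s j)) n) :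
    LinearMap.range a.unop ≤ relSpace s n := by
  induction ha using Submodule.span_induction with
  | mem a ha =>
    obtain ⟨j, hj, rfl⟩ := ha
    exact le_iSup₂_of_le j hj le_rfl
  | zero => simp
  | add a b _ _ ha hb => exact (LinearMap.range_add_le _ _).trans (sup_le ha hb)
  | smul a b _ hb => exact (LinearMap.range_comp_le_range _ _).trans hb

theorem IsCoxeterFamily.isCompl_relSpace_fixSpace [CharZero K] (hs : IsCoxeterFamily s n) :
    IsCompl (relSpace s n) (fixSpace s n) := by
  have hfac : (n ! : K) ≠ 0 := Nat.cast_ne_zero.mpr n.factorial_ne_zero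
  constructor
  · rw [Submodule.disjoint_def]
    intro x hrel hfix
    have h0 : symmetrizer n s x = 0 := relSpace_le_ker (fun j hj => hs.symmetrizer_mul hj) hrel
    have h1 := apply_eq_zero_of_mem_augmentationIdeal symmetrizer_sub_factorial_mem hfix
    rw [LinearMap.sub_apply, h0, zero_sub, neg_eq_zero, Module.End.natCast_apply,
      ← Nat.cast_smul_eq_nsmul K] at h1
    exact (smul_eq_zero.mp h1).resolve_left hfac
  · rw [codisjoint_iff, eq_top_iff]
    intro v _
    -- the mirror image of the right-invariant `symmetrizer n s` is left-invariant
    set P := (symmetrizer n fun j => MulOpposite.op (s j)).unop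
    have hfix : P v ∈ fixSpace s n := apply_mem_fixSpace (fun j hj =>
      congrArg MulOpposite.unop (hs.op.symmetrizer_mul hj)) v
    have hrel : P v - (n ! : Module.End K M) v ∈ relSpace s n :=
      range_le_relSpace_of_mem_augmentationIdeal_op symmetrizer_sub_factorial_mem ⟨v, rfl⟩
    have hv : v = (n ! : K)⁻¹ • (P v - (P v - (n ! : Module.End K M) v)) := by
      rw [sub_sub_cancel, Module.End.natCast_apply, ← Nat.cast_smul_eq_nsmul K,
        inv_smul_smul₀ hfac]
    rw [hv]
    exact Submodule.smul_mem _ _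
      (sub_mem (Submodule.mem_sup_right hfix) (Submodule.mem_sup_left hrel))

end Module

section Tensor

variable {ι : Type*}

/-- `(ℂ^ι)^{⊗ n}`, in the basis indexed by `Fin n → ι`. -/
abbrev Tensors (ι : Type*) (n : ℕ) := (Fin n → ι) → ℂ

def updatePair {n : ℕ} (j : ℕ) (I : Fin n → ι) (a b : ι) : Fin n → ι :=
  fun t => if (t : ℕ) = j then a else if (t : ℕ) = j + 1 then b else I t

section UpdatePair

variable {n j : ℕ} (I : Fin n → ι) (a b : ι)

lemma updatePair_left (hj : j + 1 < n) : updatePair j I a b ⟨j, by omega⟩ = a := by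
  simp [updatePair]

lemma updatePair_right (hj : j + 1 < n) : updatePair j I a b ⟨j + 1, hj⟩ = b := by
  simp [updatePair]

lemma updatePair_of_ne {t : Fin n} (h₁ : (t : ℕ) ≠ j) (h₂ : (t : ℕ) ≠ j + 1) :
    updatePair j I a b t = I t := by
  simp [updatePair, h₁, h₂]

lemma updatePair_comm {k : ℕ} (hjk : j + 2 ≤ k) (c d : ι) :
    updatePair k (updatePair j I a b) c d = updatePair j (updatePair k I c d) a b := by
  funext t
  simp only [updatePair]
  split_ifs <;> first | rfl | omega

lemma eq_updatePair_iff (hj : j + 1 < n) (K : Fin n → ι) :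
    K = updatePair j I a b ↔
      (∀ t : Fin n, (t : ℕ) ≠ j → (t : ℕ) ≠ j + 1 → K t = I t) ∧
        K ⟨j, by omega⟩ = a ∧ K ⟨j + 1, hj⟩ = b := by
  constructor
  · rintro rfl
    exact ⟨fun t h₁ h₂ => updatePair_of_ne I a b h₁ h₂, updatePair_left I a b hj,
      updatePair_right I a b hj⟩
  · rintro ⟨hK, ha, hb⟩
    funext t
    simp only [updatePair]
    split_ifs with h₁ h₂
    · rw [← ha]; congr; exact Fin.ext h₁
    · rw [← hb]; congr; exact Fin.ext h₂
    · exact hK t h₁ h₂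

lemma updatePair_injective (hj : j + 1 < n) :
    Function.Injective fun p : ι × ι => updatePair j I p.1 p.2 := by
  intro p q (hpq : updatePair j I p.1 p.2 = updatePair j I q.1 q.2)
  obtain ⟨-, h₁, h₂⟩ := (eq_updatePair_iff I q.1 q.2 hj _).mp hpq
  rw [updatePair_left _ _ _ hj] at h₁
  rw [updatePair_right _ _ _ hj] at h₂
  exact Prod.ext h₁ h₂

end UpdatePair

variable {n : ℕ}

/-- `X ↦ 1 ⊗ X`. -/
def idTensor : Module.End ℂ (Tensors ι n) →* Module.End ℂ (Tensors ι (n + 1)) where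
  toFun X := LinearMap.pi fun I =>
    LinearMap.proj (Fin.tail I) ∘ₗ X ∘ₗ LinearMap.funLeft ℂ ℂ fun J : Fin n → ι => Fin.cons (I 0) J
  map_one' := LinearMap.ext fun v => funext fun I => by
    simp [Fin.cons_self_tail]
  map_mul' X Y := LinearMap.ext fun v => funext fun I => by
    simp only [LinearMap.pi_apply, LinearMap.comp_apply, LinearMap.proj_apply,
      Module.End.mul_apply]
    refine congrArg (fun w => X w (Fin.tail I)) (funext fun J => ?_)
    simp [Fin.tail_cons]

/-- `X ↦ X ⊗ 1`. -/
def tensorId : Module.End ℂ (Tensors ι n) →* Module.End ℂ (Tensors ι (n + 1)) where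
  toFun X := LinearMap.pi fun I =>
    LinearMap.proj (Fin.init I) ∘ₗ X ∘ₗ
      LinearMap.funLeft ℂ ℂ fun J : Fin n → ι => Fin.snoc J (I (Fin.last n))
  map_one' := LinearMap.ext fun v => funext fun I => by
    simp [Fin.snoc_init_self]
  map_mul' X Y := LinearMap.ext fun v => funext fun I => by
    simp only [LinearMap.pi_apply, LinearMap.comp_apply, LinearMap.proj_apply,
      Module.End.mul_apply]
    refine congrArg (fun w => X w (Fin.init I)) (funext fun J => ?_)
    simp [Fin.init_snoc]

lemma idTensor_apply (X : Module.End ℂ (Tensors ι n)) (v : Tensors ι (n + 1))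
    (I : Fin (n + 1) → ι) :
    idTensor X v I = X (fun J => v (Fin.cons (I 0) J)) (Fin.tail I) := rfl

lemma tensorId_apply (X : Module.End ℂ (Tensors ι n)) (v : Tensors ι (n + 1))
    (I : Fin (n + 1) → ι) :
    tensorId X v I = X (fun J => v (Fin.snoc J (I (Fin.last n)))) (Fin.init I) := rfl

variable [DecidableEq ι]

variable (ι) in
/-- `v ↦ e_i ⊗ v`. -/
def basisTensor (i : ι) : Tensors ι n →ₗ[ℂ] Tensors ι (n + 1) :=
  LinearMap.pi fun I => if I 0 = i then LinearMap.proj (Fin.tail I) else 0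

lemma basisTensor_apply (i : ι) (v : Tensors ι n) (I : Fin (n + 1) → ι) :
    basisTensor ι i v I = if I 0 = i then v (Fin.tail I) else 0 := by
  rw [basisTensor, LinearMap.pi_apply]
  split_ifs <;> rfl

lemma idTensor_basisTensor (X : Module.End ℂ (Tensors ι n)) (i : ι) (v : Tensors ι n) :
    idTensor X (basisTensor ι i v) = basisTensor ι i (X v) := by
  funext I
  by_cases h : I 0 = i
  · simp [idTensor_apply, basisTensor_apply, h, Fin.tail_cons]
  · have : (fun J => basisTensor ι i v (Fin.cons (I 0) J)) = 0 := by
      funext J; simp [basisTensor_apply, h]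
    rw [idTensor_apply, basisTensor_apply, if_neg h, this, map_zero, Pi.zero_apply]

lemma basisTensor_single (i : ι) (J : Fin n → ι) :
    basisTensor ι i (Pi.single J 1) = Pi.single (Fin.cons i J) 1 := by
  funext I
  obtain ⟨a, K, rfl⟩ : ∃ a K, I = Fin.cons a K :=
    ⟨I 0, Fin.tail I, (Fin.cons_self_tail I).symm⟩
  simp [basisTensor_apply, Pi.single_apply, Fin.cons_inj, ite_and]

variable [Fintype ι]

lemma sum_basisTensor (v : Tensors ι (n + 1)) :
    ∑ i, basisTensor ι i (fun J => v (Fin.cons i J)) = v := by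
  funext I
  simp [Finset.sum_apply, basisTensor_apply, Fin.cons_self_tail]

lemma linearMap_ext_basisTensor {M : Type*} [AddCommMonoid M] [Module ℂ M]
    {f g : Tensors ι (n + 1) →ₗ[ℂ] M} (h : ∀ i, f ∘ₗ basisTensor ι i = g ∘ₗ basisTensor ι i) :
    f = g := by
  refine LinearMap.ext fun v => ?_
  rw [← sum_basisTensor v, map_sum, map_sum]
  exact sum_congr rfl fun i _ => LinearMap.congr_fun (h i) _

variable (R : ι → ι → ι → ι → ℂ)

noncomputable def braidOp (n j : ℕ) : Module.End ℂ (Tensors ι n) :=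
  if h : j + 1 < n then Matrix.toLin' (Rjj R n j h) else 1

variable {R} {j : ℕ}

lemma braidOp_of_lt (h : j + 1 < n) : braidOp R n j = Matrix.toLin' (Rjj R n j h) := dif_pos h

lemma braidOp_of_le (h : n ≤ j + 1) : braidOp R n j = 1 := dif_neg (by omega)

lemma braidOp_apply (h : j + 1 < n) (v : Tensors ι n) (I : Fin n → ι) :
    braidOp R n j v I = ∑ p : ι × ι,
      R (I ⟨j, by omega⟩) (I ⟨j + 1, h⟩) p.1 p.2 * v (updatePair j I p.1 p.2) := by
  rw [braidOp_of_lt h, Matrix.toLin'_apply, Matrix.mulVec, dotProduct]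
  symm
  refine Fintype.sum_of_injective (fun p : ι × ι => updatePair j I p.1 p.2) ?_ _
    (fun K => Rjj R n j h I K * v K) ?_ ?_
  · exact updatePair_injective I h
  · intro K hK
    have : ¬ ∀ t : Fin n, (t : ℕ) ≠ j → (t : ℕ) ≠ j + 1 → I t = K t := fun hIK =>
      hK ⟨(K ⟨j, by omega⟩, K ⟨j + 1, h⟩),
        ((eq_updatePair_iff I _ _ h K).mpr ⟨fun t h₁ h₂ => (hIK t h₁ h₂).symm, rfl, rfl⟩).symm⟩
    simp [Rjj, this]
  · intro p
    have hagree :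
        ∀ t : Fin n, (t : ℕ) ≠ j → (t : ℕ) ≠ j + 1 → I t = updatePair j I p.1 p.2 t :=
      fun t h₁ h₂ => (updatePair_of_ne I _ _ h₁ h₂).symm
    rw [Rjj, if_pos hagree, one_mul, updatePair_left _ _ _ h, updatePair_right _ _ _ h]

lemma braidOp_comm {k : ℕ} (hjk : j + 2 ≤ k) :
    braidOp R n j * braidOp R n k = braidOp R n k * braidOp R n j := by
  rcases le_or_gt n (k + 1) with hk | hk
  · rw [braidOp_of_le hk, mul_one, one_mul]
  have hj : j + 1 < n := by omega
  refine LinearMap.ext fun v => funext fun I => ?_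
  simp only [Module.End.mul_apply, braidOp_apply hj, braidOp_apply hk, mul_sum]
  rw [sum_comm]
  refine sum_congr rfl fun q _ => sum_congr rfl fun p _ => ?_
  rw [updatePair_of_ne _ _ _ (by simp; omega) (by simp; omega),
    updatePair_of_ne _ _ _ (by simp; omega) (by simp; omega),
    updatePair_of_ne _ _ _ (by simp; omega) (by simp; omega),
    updatePair_of_ne _ _ _ (by simp; omega) (by simp; omega), updatePair_comm _ _ _ hjk]
  ring

lemma idTensor_braidOp : idTensor (braidOp R n j) = braidOp R (n + 1) (j + 1) := by
  rcases le_or_gt n (j + 1) with h | h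
  · rw [braidOp_of_le h, braidOp_of_le (by omega), map_one]
  refine LinearMap.ext fun v => funext fun I => ?_
  rw [idTensor_apply, braidOp_apply h, braidOp_apply (by omega)]
  refine sum_congr rfl fun p _ => ?_
  congr 2
  funext t
  induction t using Fin.cases with
  | zero => simp [updatePair]
  | succ t =>
    simp only [Fin.cons_succ, updatePair, Fin.val_succ, Fin.tail]
    split_ifs <;> first | rfl | omega

lemma tensorId_braidOp (h : j + 1 < n) : tensorId (braidOp R n j) = braidOp R (n + 1) j := by
  refine LinearMap.ext fun v => funext fun I => ?_
  rw [tensorId_apply, braidOp_apply h, braidOp_apply (by omega)]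
  refine sum_congr rfl fun p _ => ?_
  congr 2
  funext t
  induction t using Fin.lastCases with
  | last =>
    simp only [Fin.snoc_last, updatePair, Fin.val_last]
    rw [if_neg (by omega), if_neg (by omega)]
  | cast t => simp [updatePair, Fin.init]

lemma braidOp_mul_self (hinv : IsInvolutiveR R) (n j : ℕ) :
    braidOp R n j * braidOp R n j = 1 := by
  induction n generalizing j with
  | zero => rw [braidOp_of_le (by omega), mul_one]
  | succ n ih =>
    cases j with
    | succ j => rw [← idTensor_braidOp, ← map_mul, ih, map_one]
    | zero =>
      rcases (show n + 1 ≤ 1 ∨ n + 1 = 2 ∨ 2 < n + 1 by omega) with h | h | h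
      · rw [braidOp_of_le h, mul_one]
      · obtain rfl : n = 1 := by omega
        rw [braidOp_of_lt (by omega), Module.End.mul_eq_comp, ← Matrix.toLin'_mul, hinv,
          Matrix.toLin'_one, Module.End.one_eq_id]
      · rw [← tensorId_braidOp (by omega), ← map_mul, ih, map_one]

lemma braidOp_braid (hybe : SatisfiesYBE R) (n j : ℕ) (h : j + 2 < n) :
    braidOp R n j * braidOp R n (j + 1) * braidOp R n j =
      braidOp R n (j + 1) * braidOp R n j * braidOp R n (j + 1) := by
  induction n generalizing j with
  | zero => omega
  | succ n ih =>
    cases j with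
    | succ j => simp only [← idTensor_braidOp, ← map_mul, ih j (by omega)]
    | zero =>
      rcases (show n + 1 = 3 ∨ 3 < n + 1 by omega) with h | h
      · obtain rfl : n = 2 := by omega
        simp only [braidOp_of_lt (by omega : 0 + 1 < 3), braidOp_of_lt (by omega : 0 + 1 + 1 < 3),
          Module.End.mul_eq_comp, ← Matrix.toLin'_mul]
        exact congrArg Matrix.toLin' hybe
      · simp only [← tensorId_braidOp (by omega : 0 + 1 < n),
          ← tensorId_braidOp (by omega : 0 + 1 + 1 < n), ← map_mul, ih 0 (by omega)]

lemma braidOp_zero_basisTensor (i j : ι) (v : Tensors ι n) :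
    braidOp R (n + 2) 0 (basisTensor ι i (basisTensor ι j v)) =
      ∑ k, ∑ l, R k l i j • basisTensor ι k (basisTensor ι l v) := by
  funext I
  obtain ⟨a, b, K, rfl⟩ : ∃ a b K, I = Fin.cons a (Fin.cons b K) :=
    ⟨I 0, I 1, Fin.tail (Fin.tail I), by
      rw [show I 1 = Fin.tail I 0 from rfl, Fin.cons_self_tail, Fin.cons_self_tail]⟩
  have hupd : ∀ c d : ι,
      updatePair 0 (Fin.cons a (Fin.cons b K)) c d = Fin.cons c (Fin.cons d K) := by
    intro c d
    funext t
    refine Fin.cases rfl (fun t => Fin.cases rfl (fun t => ?_) t) t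
    simp [updatePair]
  rw [braidOp_apply (by omega)]
  simp [hupd, basisTensor_apply, Fintype.sum_prod_type, Finset.sum_apply]

lemma relSpace_le_comap_basisTensor (i : ι) :
    relSpace (braidOp R n) n ≤
      (relSpace (braidOp R (n + 1)) (n + 1)).comap (basisTensor ι i) := by
  refine iSup₂_le fun j hj => ?_
  rintro _ ⟨v, rfl⟩
  rw [Submodule.mem_comap, LinearMap.sub_apply, map_sub, ← idTensor_basisTensor,
    idTensor_braidOp, Module.End.one_apply]
  exact apply_sub_self_mem_relSpace (by omega) _

theorem isCoxeterFamily_braidOp (hinv : IsInvolutiveR R) (hybe : SatisfiesYBE R) (n : ℕ) :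
    IsCoxeterFamily (braidOp R n) n where
  mul_self j _ := braidOp_mul_self hinv n j
  braid j hj := braidOp_braid hybe n j hj
  comm _ _ hjk _ := braidOp_comm hjk

end Tensor

section Fock

variable {m : ℕ} {R : Fin m → Fin m → Fin m → Fin m → ℂ}

lemma muN_single {n : ℕ} (K : Fin n → Fin m) :
    muN m R n (Pi.single K 1) = ((List.finRange n).map fun t => psiP m R (K t)).prod := by
  rw [← Pi.basisFun_apply, muN, Module.Basis.constr_basis]

lemma muN_basisTensor {n : ℕ} (i : Fin m) (v : Tensors (Fin m) n) :
    muN m R (n + 1) (basisTensor (Fin m) i v) = psiP m R i * muN m R n v := by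
  suffices muN m R (n + 1) ∘ₗ basisTensor (Fin m) i =
      LinearMap.mulLeft ℂ (psiP m R i) ∘ₗ muN m R n from LinearMap.congr_fun this v
  refine (Pi.basisFun ℂ (Fin n → Fin m)).ext fun K => ?_
  simp only [LinearMap.comp_apply, Pi.basisFun_apply, basisTensor_single, muN_single,
    LinearMap.mulLeft_apply, List.finRange_succ, List.map_cons, List.prod_cons, List.map_map]
  rfl

lemma psiP_mul_psiP (i j : Fin m) :
    psiP m R i * psiP m R j = ∑ k, ∑ l, R k l i j • (psiP m R k * psiP m R l) := by
  simpa [psiP, map_sum, map_smul, map_mul] using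
    RingQuot.mkAlgHom_rel ℂ (CpRel.rel (m := m) (R := R) i j)

lemma muN_comp_braidOp (n j : ℕ) : muN m R n ∘ₗ braidOp R n j = muN m R n := by
  induction n generalizing j with
  | zero => rw [braidOp_of_le (by omega)]; rfl
  | succ n ih =>
    refine linearMap_ext_basisTensor fun i => LinearMap.ext fun v => ?_
    cases j with
    | succ j =>
      simp only [LinearMap.comp_apply, ← idTensor_braidOp, idTensor_basisTensor,
        muN_basisTensor]
      rw [← LinearMap.comp_apply (muN m R n), ih]
    | zero =>
      cases n with
      | zero => rw [braidOp_of_le (by omega)]; rfl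
      | succ n =>
        rw [← sum_basisTensor v]
        simp only [LinearMap.comp_apply, map_sum, braidOp_zero_basisTensor, map_smul,
          muN_basisTensor, ← mul_assoc, ← smul_mul_assoc, ← sum_mul]
        refine sum_congr rfl fun l _ => ?_
        rw [psiP_mul_psiP]
        simp only [smul_mul_assoc]

lemma relSpace_le_ker_muN (n : ℕ) : relSpace (braidOp R n) n ≤ LinearMap.ker (muN m R n) := by
  refine iSup₂_le fun j _ => ?_
  rintro _ ⟨v, rfl⟩
  rw [LinearMap.mem_ker, LinearMap.sub_apply, map_sub, ← LinearMap.comp_apply,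
    muN_comp_braidOp, Module.End.one_apply, sub_self]

variable (m R) in
abbrev FockSpace := DirectSum ℕ fun n => Tensors (Fin m) n ⧸ relSpace (braidOp R n) n

variable (R) in
noncomputable def creation (i : Fin m) : Module.End ℂ (FockSpace m R) :=
  DirectSum.toModule ℂ ℕ _ fun n => DirectSum.lof ℂ ℕ _ (n + 1) ∘ₗ
    (relSpace (braidOp R n) n).mapQ _ (basisTensor (Fin m) i) (relSpace_le_comap_basisTensor i)

lemma creation_lof_mk (i : Fin m) {n : ℕ} (v : Tensors (Fin m) n) :
    creation R i (DirectSum.lof ℂ ℕ _ n (Submodule.Quotient.mk v)) =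
      DirectSum.lof ℂ ℕ _ (n + 1) (Submodule.Quotient.mk (basisTensor (Fin m) i v)) := by
  rw [creation, DirectSum.toModule_lof]
  rfl

lemma creation_mul_creation (i j : Fin m) :
    creation R i * creation R j = ∑ k, ∑ l, R k l i j • (creation R k * creation R l) := by
  refine DirectSum.linearMap_ext ℂ fun n =>
    Submodule.linearMap_qext _ (LinearMap.ext fun v => ?_)
  simp only [LinearMap.comp_apply, Submodule.mkQ_apply, LinearMap.sum_apply,
    LinearMap.smul_apply, Module.End.mul_apply, creation_lof_mk, ← map_smul, ← map_sum]
  congr 1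
  rw [← (Submodule.Quotient.eq _).mpr
      (apply_sub_self_mem_relSpace (s := braidOp R (n + 2)) (j := 0) (by omega) _),
    braidOp_zero_basisTensor]
  simp only [← Submodule.mkQ_apply, map_sum, map_smul]

variable (R) in
noncomputable def fockRep : Cp m R →ₐ[ℂ] Module.End ℂ (FockSpace m R) :=
  RingQuot.liftAlgHom ℂ ⟨FreeAlgebra.lift ℂ (creation R), by
    rintro _ _ ⟨i, j⟩
    simp only [map_mul, map_sum, map_smul, FreeAlgebra.lift_ι_apply]
    exact creation_mul_creation i j⟩

lemma fockRep_psiP (i : Fin m) : fockRep R (psiP m R i) = creation R i := by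
  rw [psiP, fockRep, RingQuot.liftAlgHom_mkAlgHom_apply, FreeAlgebra.lift_ι_apply]

variable (m R) in
noncomputable def vacuum : FockSpace m R :=
  DirectSum.lof ℂ ℕ _ 0 (Submodule.Quotient.mk fun _ => 1)

lemma fockRep_muN_vacuum (n : ℕ) (v : Tensors (Fin m) n) :
    fockRep R (muN m R n v) (vacuum m R) = DirectSum.lof ℂ ℕ _ n (Submodule.Quotient.mk v) := by
  induction n with
  | zero =>
    have hone : (fun _ => 1 : Tensors (Fin m) 0) = Pi.single Fin.elim0 1 :=
      funext fun I => by simp [Subsingleton.elim I Fin.elim0]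
    have hv : v = v Fin.elim0 • fun _ => 1 := funext fun I => by
      simp [Subsingleton.elim I Fin.elim0]
    rw [hv, map_smul, map_smul, LinearMap.smul_apply, Submodule.Quotient.mk_smul, map_smul,
      vacuum, hone, muN_single, List.finRange_zero, List.map_nil, List.prod_nil, map_one,
      Module.End.one_apply]
  | succ n ih =>
    suffices (LinearMap.applyₗ (vacuum m R) ∘ₗ (fockRep R).toLinearMap ∘ₗ muN m R (n + 1)) =
        DirectSum.lof ℂ ℕ _ (n + 1) ∘ₗ Submodule.mkQ _ from LinearMap.congr_fun this v
    refine linearMap_ext_basisTensor fun i => LinearMap.ext fun w => ?_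
    simp only [LinearMap.comp_apply, LinearMap.applyₗ_apply_apply, AlgHom.toLinearMap_apply,
      muN_basisTensor, map_mul, Module.End.mul_apply, ih, fockRep_psiP, creation_lof_mk,
      Submodule.mkQ_apply]

lemma ker_muN_le_relSpace (n : ℕ) : LinearMap.ker (muN m R n) ≤ relSpace (braidOp R n) n := by
  intro v hv
  have h := fockRep_muN_vacuum (R := R) n v
  rw [LinearMap.mem_ker.mp hv, map_zero, LinearMap.zero_apply, DirectSum.lof_eq_of] at h
  exact (Submodule.Quotient.mk_eq_zero _).mp
    (DirectSum.of_injective n (h.symm.trans (map_zero _).symm))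

end Fock

end YangBaxter

open YangBaxter

theorem range_muN_iso_common_eigenspace_general (m : ℕ) (R : Fin m → Fin m → Fin m → Fin m → ℂ)
    (hinv : IsInvolutiveR R) (hybe : SatisfiesYBE R) (n : ℕ) :
    Nonempty (↥(LinearMap.range (muN m R n)) ≃ₗ[ℂ]
        ↥(⨅ (j : ℕ) (hj : j + 1 < n),
          LinearMap.ker (Matrix.toLin' (Rjj R n j hj) - LinearMap.id))) ∧
      Module.finrank ℂ ↥(LinearMap.range (muN m R n)) =
        Module.finrank ℂ ↥(⨅ (j : ℕ) (hj : j + 1 < n),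
          LinearMap.ker (Matrix.toLin' (Rjj R n j hj) - LinearMap.id)) := by
  have hker : LinearMap.ker (muN m R n) = relSpace (braidOp R n) n :=
    le_antisymm (ker_muN_le_relSpace n) (relSpace_le_ker_muN n)
  have hfix : (⨅ (j : ℕ) (hj : j + 1 < n),
      LinearMap.ker (Matrix.toLin' (Rjj R n j hj) - LinearMap.id)) = fixSpace (braidOp R n) n :=
    iInf_congr fun j => iInf_congr fun hj => by rw [braidOp_of_lt hj, Module.End.one_eq_id]
  let e := (LinearMap.quotKerEquivRange (muN m R n)).symm ≪≫ₗ
    Submodule.quotEquivOfEq _ _ hker ≪≫ₗ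
    Submodule.quotientEquivOfIsCompl _ _
      (isCoxeterFamily_braidOp hinv hybe n).isCompl_relSpace_fixSpace
  rw [hfix]
  exact ⟨⟨e⟩, e.finrank_eq⟩

/-- If `R` is involutive and satisfies the Yang–Baxter equation and
`n ≥ 1`, then the image of `μ_n` (the `n`-particle sector of the Fock space) is linearly
isomorphic to the common eigenspace `{Ψ | R_{j,j+1} Ψ = Ψ for all j}`; in particular the
rank of `μ_n` equals the dimension of this common eigenspace (positions 0-indexed). -/
theorem range_muN_iso_common_eigenspace (m : ℕ) (R : Fin m → Fin m → Fin m → Fin m → ℂ)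
    (hinv : IsInvolutiveR R) (hybe : SatisfiesYBE R) (n : ℕ) (hn : 1 ≤ n) :
    Nonempty (↥(LinearMap.range (muN m R n)) ≃ₗ[ℂ]
        ↥(⨅ (j : ℕ) (hj : j + 1 < n),
          LinearMap.ker (Matrix.toLin' (Rjj R n j hj) - LinearMap.id))) ∧
      Module.finrank ℂ ↥(LinearMap.range (muN m R n)) =
        Module.finrank ℂ ↥(⨅ (j : ℕ) (hj : j + 1 < n),
          LinearMap.ker (Matrix.toLin' (Rjj R n j hj) - LinearMap.id)) :=
  range_muN_iso_common_eigenspace_general m R hinv hybe n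
end
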